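/- The function h_α(s) = R_{α,n}(s)/W_n(β), where R_{α,n}(s) = (1−s_1)^{−α}(s_1−s_2)^{−α}⋯(s_{n−1}−s_n)^{−α} and W_n(β) = Γ(β)^n/Γ(1+nβ), is a probability density on the simplex S(n): it is nonnegative and integrates to 1 over S(n). -/

import Mathlib

/-! Write `S_n(x) = {x > s₀ > ⋯ > s_{n-1} > 0}` and `I_n(x)` for the integral over `S_n(x)` of
`∏ (s_{i-1} - s_i)^(β-1)` with `s_{-1} = x`. Splitting off the largest coordinate `y = s₀` gives
`I_{n+1}(x) = ∫₀ˣ (x - y)^(β-1) I_n(y) dy`, and since `I_n(y) = y^(nβ) Γ(β)^n / Γ(nβ+1)` by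
induction, this is a scaled Beta integral `x^((n+1)β) B(nβ+1, β) Γ(β)^n / Γ(nβ+1)`. At `x = 1`
the kernel on `S_{n+1}(1)` is `R_{α,n}`, so its integral is `W_n(β)`.
-/

open MeasureTheory

/-- The kernel `R_{α,n}(s) = (1-s_1)^{-α}(s_1-s_2)^{-α}⋯(s_{n-1}-s_n)^{-α}` on the
ordered simplex, with `α = 1-β`. -/
noncomputable def singularKernel (β : ℝ) {n : ℕ} (s : Fin (n + 1) → ℝ) : ℝ :=
  ∏ i : Fin (n + 1),
    ((if h : (i : ℕ) = 0 then 1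
      else s ⟨(i : ℕ) - 1, by have := i.isLt; omega⟩) - s i) ^ (-(1 - β))

open Set
open ProbabilityTheory (beta beta_pos)

theorem Fin.strictAnti_cons {α : Type*} [Preorder α] {n : ℕ} {f : Fin n → α} {a : α} :
    StrictAnti (Fin.cons a f : Fin (n + 1) → α) ↔ (∀ j, f j < a) ∧ StrictAnti f :=
  Fin.liftFun_cons (· > ·)

lemma lintegral_Ioo_rpow_mul_one_sub_rpow {a b : ℝ} (ha : 0 < a) (hb : 0 < b) :
    ∫⁻ u in Ioo 0 1, ENNReal.ofReal (u ^ (a - 1) * (1 - u) ^ (b - 1)) =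
      ENNReal.ofReal (beta a b) := by
  have h := ProbabilityTheory.lintegral_betaPDF_eq_one ha hb
  have hB := beta_pos ha hb
  rw [ProbabilityTheory.lintegral_betaPDF] at h
  simp_rw [mul_assoc, ENNReal.ofReal_mul (one_div_pos.2 hB).le] at h
  rw [lintegral_const_mul' _ _ ENNReal.ofReal_ne_top, ENNReal.ofReal_div_of_pos hB,
    ENNReal.ofReal_one, one_div] at h
  exact (inv_inj.mp (ENNReal.eq_inv_of_mul_eq_one_left h)).symm

lemma lintegral_Ioo_rpow_mul_sub_rpow {a b x : ℝ} (ha : 0 < a) (hb : 0 < b) (hx : 0 < x) :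
    ∫⁻ y in Ioo 0 x, ENNReal.ofReal (y ^ (a - 1) * (x - y) ^ (b - 1))
      = ENNReal.ofReal (x ^ (a + b - 1) * beta a b) := by
  have himage : (x * ·) '' Ioo 0 1 = Ioo 0 x := by
    simpa using image_mul_left_Ioo hx (0 : ℝ) 1
  rw [← himage, lintegral_image_eq_lintegral_abs_deriv_mul (f' := fun _ => x * 1) measurableSet_Ioo
    (fun u _ => ((hasDerivAt_id' u).const_mul x).hasDerivWithinAt)
    (mul_right_injective₀ hx.ne').injOn, ENNReal.ofReal_mul (by positivity),
    ← lintegral_Ioo_rpow_mul_one_sub_rpow ha hb,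
    ← lintegral_const_mul' _ _ ENNReal.ofReal_ne_top]
  refine setLIntegral_congr_fun measurableSet_Ioo fun u ⟨hu0, hu1⟩ => ?_
  rw [← ENNReal.ofReal_mul (abs_nonneg _), ← ENNReal.ofReal_mul (by positivity)]
  congr 1
  have hxy : x - x * u = x * (1 - u) := by ring
  rw [mul_one, abs_of_pos hx, hxy, Real.mul_rpow hx.le hu0.le, Real.mul_rpow hx.le (by linarith),
    show a + b - 1 = 1 + (a - 1) + (b - 1) by ring, Real.rpow_add hx, Real.rpow_add hx,
    Real.rpow_one]
  ring

def orderedSimplex (n : ℕ) (x : ℝ) : Set (Fin n → ℝ) :=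
  {s | StrictAnti s ∧ ∀ i, s i ∈ Ioo 0 x}

/-- `Fin.cons x s i.castSucc` is the predecessor of `s i`, with `x` in front of `s 0`. -/
noncomputable def gapKernel (β x : ℝ) {n : ℕ} (s : Fin n → ℝ) : ℝ :=
  ∏ i, ((Fin.cons x s : Fin (n + 1) → ℝ) i.castSucc - s i) ^ (β - 1)

section

variable {n : ℕ} {β x y : ℝ}

theorem measurableSet_orderedSimplex (n : ℕ) (x : ℝ) : MeasurableSet (orderedSimplex n x) := by
  have h : orderedSimplex n x =
      (⋂ (i) (j) (_ : i < j), {s | s j < s i}) ∩ univ.pi fun _ => Ioo 0 x := by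
    ext s; simp [orderedSimplex, StrictAnti]
  rw [h]
  exact .inter (.iInter fun i => .iInter fun j => .iInter fun _ =>
      measurableSet_lt (measurable_pi_apply j) (measurable_pi_apply i))
    (.univ_pi fun _ => measurableSet_Ioo)

theorem measurable_gapKernel (β x : ℝ) (n : ℕ) : Measurable (gapKernel β x (n := n)) := by
  refine Finset.measurable_prod _ fun i _ => ?_
  have : Measurable fun s : Fin n → ℝ => (Fin.cons x s : Fin (n + 1) → ℝ) i.castSucc :=
    (by fun_prop : Continuous fun s : Fin n → ℝ => (Fin.cons x s : Fin (n + 1) → ℝ)).measurable.eval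
  fun_prop

theorem cons_mem_orderedSimplex_iff {t : Fin n → ℝ} :
    (Fin.cons y t : Fin (n + 1) → ℝ) ∈ orderedSimplex (n + 1) x ↔
      y ∈ Ioo 0 x ∧ t ∈ orderedSimplex n y := by
  simp only [orderedSimplex, mem_ofPred_eq, Fin.strictAnti_cons, Fin.forall_fin_succ,
    Fin.cons_zero, Fin.cons_succ, mem_Ioo]
  constructor
  · rintro ⟨⟨hty, ht⟩, hy, htx⟩
    exact ⟨hy, ht, fun i => ⟨(htx i).1, hty i⟩⟩
  · rintro ⟨hy, ht, hty⟩
    exact ⟨⟨fun i => (hty i).2, ht⟩, hy, fun i => ⟨(hty i).1, (hty i).2.trans hy.2⟩⟩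

theorem gapKernel_cons (t : Fin n → ℝ) :
    gapKernel β x (Fin.cons y t : Fin (n + 1) → ℝ) = (x - y) ^ (β - 1) * gapKernel β y t := by
  simp [gapKernel, Fin.prod_univ_succ]

theorem gapKernel_nonneg {s : Fin n → ℝ} (hs : s ∈ orderedSimplex n x) : 0 ≤ gapKernel β x s := by
  induction n generalizing x with
  | zero => simp [gapKernel]
  | succ n ih =>
    rw [← Fin.cons_self_tail s] at hs ⊢
    obtain ⟨hy, ht⟩ := cons_mem_orderedSimplex_iff.mp hs
    rw [gapKernel_cons]
    exact mul_nonneg (Real.rpow_nonneg (sub_nonneg.mpr hy.2.le) _) (ih ht)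

theorem indicator_orderedSimplex_cons (t : Fin n → ℝ) :
    (orderedSimplex (n + 1) x).indicator (fun s => ENNReal.ofReal (gapKernel β x s))
        (Fin.cons y t : Fin (n + 1) → ℝ) =
      (Ioo 0 x).indicator (fun y => ENNReal.ofReal ((x - y) ^ (β - 1))) y *
        (orderedSimplex n y).indicator (fun t => ENNReal.ofReal (gapKernel β y t)) t := by
  by_cases hy : y ∈ Ioo 0 x
  · by_cases ht : t ∈ orderedSimplex n y
    · rw [indicator_of_mem (cons_mem_orderedSimplex_iff.mpr ⟨hy, ht⟩), indicator_of_mem hy,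
        indicator_of_mem ht, gapKernel_cons,
        ENNReal.ofReal_mul (Real.rpow_nonneg (sub_nonneg.mpr hy.2.le) _)]
    · rw [indicator_of_notMem (fun h => ht (cons_mem_orderedSimplex_iff.mp h).2),
        indicator_of_notMem ht, mul_zero]
  · rw [indicator_of_notMem (fun h => hy (cons_mem_orderedSimplex_iff.mp h).1),
      indicator_of_notMem hy, zero_mul]

theorem lintegral_gapKernel_succ (n : ℕ) (x : ℝ) :
    ∫⁻ s in orderedSimplex (n + 1) x, ENNReal.ofReal (gapKernel β x s) =
      ∫⁻ y in Ioo 0 x, ENNReal.ofReal ((x - y) ^ (β - 1)) *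
        ∫⁻ t in orderedSimplex n y, ENNReal.ofReal (gapKernel β y t) := by
  set e := MeasurableEquiv.piFinSuccAbove (fun _ : Fin (n + 1) => ℝ) 0
  have he (p : ℝ × (Fin n → ℝ)) : e.symm p = Fin.cons p.1 p.2 := by
    simp [e, MeasurableEquiv.piFinSuccAbove, Fin.insertNthEquiv, Fin.insertNth_zero']
  have hmeas : Measurable fun p => (orderedSimplex (n + 1) x).indicator
      (fun s => ENNReal.ofReal (gapKernel β x s)) (e.symm p) :=
    ((measurable_gapKernel β x (n + 1)).ennreal_ofReal.indicator
      (measurableSet_orderedSimplex (n + 1) x)).comp e.symm.measurable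
  rw [← lintegral_indicator (measurableSet_orderedSimplex _ _),
    ← (volume_preserving_piFinSuccAbove (fun _ : Fin (n + 1) => ℝ) 0).symm.lintegral_comp_emb
      e.symm.measurableEmbedding,
    Measure.volume_eq_prod, lintegral_prod _ hmeas.aemeasurable,
    ← lintegral_indicator measurableSet_Ioo]
  refine lintegral_congr fun y => ?_
  simp_rw [he, indicator_orderedSimplex_cons]
  rw [lintegral_const_mul _ ((measurable_gapKernel β y n).ennreal_ofReal.indicator
      (measurableSet_orderedSimplex n y)), lintegral_indicator (measurableSet_orderedSimplex n y),
    indicator_mul_left]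

theorem lintegral_gapKernel (hβ : 0 < β) (n : ℕ) (hx : 0 < x) :
    ∫⁻ s in orderedSimplex n x, ENNReal.ofReal (gapKernel β x s)
      = ENNReal.ofReal (x ^ (n * β) * (Real.Gamma β ^ n / Real.Gamma (n * β + 1))) := by
  induction n generalizing x with
  | zero =>
    have : orderedSimplex 0 x = univ :=
      eq_univ_of_forall fun s => ⟨Subsingleton.strictAnti s, finZeroElim⟩
    simp [this, gapKernel, volume_pi]
  | succ n ih =>
    have hslice : ∀ y ∈ Ioo 0 x, ENNReal.ofReal ((x - y) ^ (β - 1)) *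
          ∫⁻ t in orderedSimplex n y, ENNReal.ofReal (gapKernel β y t) =
        ENNReal.ofReal (y ^ (n * β + 1 - 1) * (x - y) ^ (β - 1)) *
          ENNReal.ofReal (Real.Gamma β ^ n / Real.Gamma (n * β + 1)) := fun y hy => by
      rw [ih hy.1, add_sub_cancel_right, ENNReal.ofReal_mul (Real.rpow_nonneg hy.1.le _),
        ENNReal.ofReal_mul (Real.rpow_nonneg hy.1.le _)]
      ring
    rw [lintegral_gapKernel_succ, setLIntegral_congr_fun measurableSet_Ioo hslice,
      lintegral_mul_const _ (by fun_prop), lintegral_Ioo_rpow_mul_sub_rpow (by positivity) hβ hx,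
      ← ENNReal.ofReal_mul
        (mul_nonneg (Real.rpow_nonneg hx.le _) (beta_pos (by positivity) hβ).le)]
    have hG : Real.Gamma (n * β + 1) ≠ 0 := (Real.Gamma_pos_of_pos (by positivity)).ne'
    congr 1
    rw [beta, show (n * β + 1 + β - 1 : ℝ) = (n + 1 : ℕ) * β by push_cast; ring,
      show (n * β + 1 + β : ℝ) = (n + 1 : ℕ) * β + 1 by push_cast; ring]
    field_simp
    ring

theorem integral_gapKernel (hβ : 0 < β) (n : ℕ) (hx : 0 < x) :
    ∫ s in orderedSimplex n x, gapKernel β x s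
      = x ^ (n * β) * (Real.Gamma β ^ n / Real.Gamma (n * β + 1)) := by
  rw [integral_eq_lintegral_of_nonneg_ae
      (ae_restrict_of_forall_mem (measurableSet_orderedSimplex n x) fun _ => gapKernel_nonneg)
      (measurable_gapKernel β x n).aestronglyMeasurable,
    lintegral_gapKernel hβ n hx, ENNReal.toReal_ofReal]
  exact mul_nonneg (Real.rpow_nonneg hx.le _)
    (div_nonneg (pow_nonneg (Real.Gamma_pos_of_pos hβ).le _)
      (Real.Gamma_pos_of_pos (by positivity)).le)

theorem singularKernel_eq_gapKernel (s : Fin (n + 1) → ℝ) :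
    singularKernel β s = gapKernel β 1 s := by
  refine Finset.prod_congr rfl fun i _ => ?_
  rw [neg_sub]
  congr 2
  cases i using Fin.cases with
  | zero => rfl
  | succ j => exact dif_neg (Nat.succ_ne_zero j)

end

/-- `h_α(s) = R_{α,n}(s)/W_n(β)` with `W_n(β) = Γ(β)^n/Γ(1+nβ)` is a probability
density on the simplex `S(n)`: it is nonnegative there and integrates to `1`. -/
theorem polygonal_beta_density (n : ℕ) (β : ℝ) (hβ : β ∈ Set.Ioo (0 : ℝ) 1) :
    (∀ s ∈ {s : Fin (n + 1) → ℝ | StrictAnti s ∧ ∀ i, s i ∈ Set.Ioo (0 : ℝ) 1},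
      0 ≤ singularKernel β s / (Real.Gamma β ^ (n + 1) / Real.Gamma (1 + (n + 1) * β))) ∧
    (∫ s in {s : Fin (n + 1) → ℝ | StrictAnti s ∧ ∀ i, s i ∈ Set.Ioo (0 : ℝ) 1},
        singularKernel β s / (Real.Gamma β ^ (n + 1) / Real.Gamma (1 + (n + 1) * β)))
      = 1 := by
  obtain ⟨hβ0, -⟩ := hβ
  have hS : {s : Fin (n + 1) → ℝ | StrictAnti s ∧ ∀ i, s i ∈ Set.Ioo (0 : ℝ) 1} =
    orderedSimplex (n + 1) 1 := rfl
  have hW : 0 < Real.Gamma β ^ (n + 1) / Real.Gamma (1 + (n + 1) * β) :=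
    div_pos (pow_pos (Real.Gamma_pos_of_pos hβ0) _) (Real.Gamma_pos_of_pos (by positivity))
  simp_rw [hS, singularKernel_eq_gapKernel]
  refine ⟨fun s hs => div_nonneg (gapKernel_nonneg hs) hW.le, ?_⟩
  rw [integral_div, integral_gapKernel hβ0 (n + 1) one_pos, Real.one_rpow, one_mul,
    Nat.cast_succ, add_comm _ (1 : ℝ), div_self hW.ne']
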